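/- Let 0 < η < μ < 1 and let x₁,...,x_n ∈ ℝ^d have entries i.i.d. uniform in {μ−η, μ+η}. If n = Ω(d²·log²(d/(δη))/η²), then with probability at least 1−δ, for every unit vector u ∈ ℝ^d: (1/n)∑_i (x_iᵀu)² ≥ η²/3. -/

import Mathlib

/-!
Write the samples as `x_i = μ𝟙 + η y_i` with `y_i ∈ {±1}^d` and prepend a constant coordinate,
`ŷ_i = (1, y_i) ∈ {±1}^(d+1)`. Then `⟪x_i, u⟫ = ⟪ŷ_i, z⟫` with `z = (μ ∑ₖ u_k, η u)`, and
`‖z‖² ≥ η²` for a unit vector `u`. The Gram matrix `∑_i ŷ_i ŷ_iᵀ` has diagonal `n`; once all its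
off-diagonal entries are at most `2n / (3(d+1))` in absolute value, a Gershgorin-type bound gives
`∑_i ⟪ŷ_i, z⟫² ≥ (n/3) ‖z‖² ≥ n η² / 3`.

Each off-diagonal entry is a sum of `n` independent bounded variables of mean zero (flipping a
single coordinate of a row changes its sign), so Hoeffding's inequality and a union bound over the
entries bound the failure probability by `2(d+1)² exp(-2n / (9(d+1)²)) ≤ δ` when `d ≥ 2`.
For `d = 1` the sample bound allows `n = 1` when `δη` is close to `1`, too few samples to pay for
the union bound; but since `μ > η` only a very negative `∑_i y_i` does harm, and a one-sided
Hoeffding bound suffices.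
-/

open Finset Real MeasureTheory ProbabilityTheory
open scoped NNReal

section UniformMeasure

variable {V : Type*} [Fintype V] [MeasurableSpace V] [DiscreteMeasurableSpace V]

lemma integral_uniformOn_univ (f : V → ℝ) :
    ∫ v, f v ∂uniformOn (Set.univ : Set V) = (∑ v, f v) / Fintype.card V := by
  simp [uniformOn, ProbabilityTheory.cond, integral_smul_measure, div_eq_inv_mul]

lemma hasSubgaussianMGF_uniformOn_of_sign_reversing [Nonempty V] {g : V → ℝ}
    (hg : ∀ v, |g v| ≤ 1) (σ : Equiv.Perm V) (hσ : ∀ v, g (σ v) = -g v) :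
    HasSubgaussianMGF g 1 (uniformOn Set.univ) := by
  have hsum : ∑ v, g v = 0 := by
    have : ∑ v, g (σ v) = -∑ v, g v := by simp only [hσ, Finset.sum_neg_distrib]
    linarith [Equiv.sum_comp σ g]
  convert hasSubgaussianMGF_of_mem_Icc_of_integral_eq_zero (a := -1) (b := 1) (X := g)
    Measurable.of_discrete.aemeasurable
    (ae_of_all _ fun v => abs_le.1 (hg v))
    (by rw [integral_uniformOn_univ, hsum, zero_div])
  ext
  norm_num

lemma uniformOn_real_sum_ge_le {ι : Type*} [Fintype ι] [Nonempty V] {g : V → ℝ} {c : ℝ≥0}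
    (hg : HasSubgaussianMGF g c (uniformOn Set.univ)) {ε : ℝ} (hε : 0 ≤ ε) :
    (uniformOn (Set.univ : Set (ι → V))).real {ω | ε ≤ ∑ i, g (ω i)} ≤
      exp (-ε ^ 2 / (2 * (Fintype.card ι * c))) := by
  have hpi : uniformOn (Set.univ : Set (ι → V)) = Measure.pi fun _ => uniformOn Set.univ := by
    rw [← uniformOn_pi, Set.pi_univ]
  rw [hpi]
  have hcoord : ∀ i, HasSubgaussianMGF (fun ω : ι → V => g (ω i)) c
      (Measure.pi fun _ => uniformOn Set.univ) := fun i =>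
    HasSubgaussianMGF.of_map (Y := fun ω : ι → V => ω i) (measurable_pi_apply i).aemeasurable
      (by rwa [(measurePreserving_eval _ i).map_eq])
  simpa using HasSubgaussianMGF.measure_sum_ge_le_of_iIndepFun
    (iIndepFun_pi fun _ => Measurable.of_discrete.aemeasurable) (c := fun _ => c)
    (s := Finset.univ) (fun i _ => hcoord i) hε

lemma uniformOn_real_abs_sum_ge_le {ι : Type*} [Fintype ι] [Nonempty V] {g : V → ℝ} {c : ℝ≥0}
    (hg : HasSubgaussianMGF g c (uniformOn Set.univ)) {ε : ℝ} (hε : 0 ≤ ε) :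
    (uniformOn (Set.univ : Set (ι → V))).real {ω | ε ≤ |∑ i, g (ω i)|} ≤
      2 * exp (-ε ^ 2 / (2 * (Fintype.card ι * c))) := by
  have hsplit : {ω : ι → V | ε ≤ |∑ i, g (ω i)|} =
      {ω | ε ≤ ∑ i, g (ω i)} ∪ {ω | ε ≤ ∑ i, (-g) (ω i)} := by
    ext ω
    simp only [Set.mem_union, Set.mem_ofPred_eq, le_abs, Pi.neg_apply, Finset.sum_neg_distrib]
  calc _ ≤ (uniformOn Set.univ).real {ω : ι → V | ε ≤ ∑ i, g (ω i)} +
        (uniformOn Set.univ).real {ω : ι → V | ε ≤ ∑ i, (-g) (ω i)} :=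
        hsplit ▸ measureReal_union_le _ _
    _ ≤ _ := by
        linarith [uniformOn_real_sum_ge_le (ι := ι) hg hε,
          uniformOn_real_sum_ge_le (ι := ι) hg.neg hε]

lemma one_sub_le_sum_ite_inv_card [Nonempty V] (p : V → Prop) [DecidablePred p] {δ : ℝ}
    (h : (uniformOn (Set.univ : Set V)).real {ω | ¬p ω} ≤ δ) :
    1 - δ ≤ ∑ ω, if p ω then (Fintype.card V : ℝ)⁻¹ else 0 := by
  have hsum : ∑ ω, (if p ω then (Fintype.card V : ℝ)⁻¹ else 0) =
      (uniformOn (Set.univ : Set V)).real {ω | p ω} := by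
    rw [← Finset.coe_filter_univ, measureReal_def, uniformOn_univ, Measure.count_apply_finset]
    simp [Finset.sum_ite, div_eq_mul_inv]
  rw [← Set.compl_ofPred, probReal_compl_eq_one_sub .of_discrete] at h
  linarith

end UniformMeasure

section Gram

variable {ι κ : Type*} [Fintype ι] [Fintype κ]

lemma sum_mul_mul_ge_of_abs_le [DecidableEq κ] (G : κ → κ → ℝ) {c ε : ℝ} (hε : 0 ≤ ε)
    (hdiag : ∀ j, G j j = c) (hoff : ∀ j l, j ≠ l → |G j l| ≤ ε) (z : κ → ℝ) :
    (c - Fintype.card κ * ε) * ∑ j, z j ^ 2 ≤ ∑ j, ∑ l, z j * z l * G j l := by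
  set E : κ → κ → ℝ := fun j l => G j l - if j = l then c else 0
  have hE : ∀ j l, -(|z j| * |z l| * ε) ≤ z j * z l * E j l := by
    intro j l
    have hEle : |E j l| ≤ ε := by
      by_cases h : j = l
      · simp [E, h, hdiag, hε]
      · simpa [E, h] using hoff j l h
    refine neg_le_of_abs_le ?_
    rw [abs_mul, abs_mul]
    exact mul_le_mul_of_nonneg_left hEle (by positivity)
  have hsplit : ∑ j, ∑ l, z j * z l * G j l = c * ∑ j, z j ^ 2 + ∑ j, ∑ l, z j * z l * E j l := by
    simp only [E, mul_sub, Finset.sum_sub_distrib, mul_ite, mul_zero, Finset.sum_ite_eq,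
      Finset.mem_univ, if_true, Finset.mul_sum]
    ring_nf
  have habs : ∑ j, ∑ l, |z j| * |z l| * ε = ε * (∑ j, |z j|) ^ 2 := by
    rw [sq, Finset.sum_mul_sum, Finset.mul_sum]
    exact Finset.sum_congr rfl fun j _ => by
      rw [Finset.mul_sum]; exact Finset.sum_congr rfl fun l _ => by ring
  have hcs : (∑ j, |z j|) ^ 2 ≤ Fintype.card κ * ∑ j, z j ^ 2 := by
    simpa using sq_sum_le_card_mul_sum_sq (s := Finset.univ) (f := fun j => |z j|)
  calc (c - Fintype.card κ * ε) * ∑ j, z j ^ 2 ≤ c * ∑ j, z j ^ 2 - ε * (∑ j, |z j|) ^ 2 := by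
        nlinarith [mul_le_mul_of_nonneg_left hcs hε]
    _ = c * ∑ j, z j ^ 2 + ∑ j, ∑ l, -(|z j| * |z l| * ε) := by
        simp only [Finset.sum_neg_distrib, habs]; ring
    _ ≤ c * ∑ j, z j ^ 2 + ∑ j, ∑ l, z j * z l * E j l := by
        gcongr with j _ l _; exact hE j l
    _ = _ := hsplit.symm

lemma sum_sq_sum_mul_ge_of_sq_eq_one [DecidableEq κ] (a : ι → κ → ℝ) (ha : ∀ i j, a i j ^ 2 = 1)
    {ε : ℝ} (hε : 0 ≤ ε) (hoff : ∀ j l, j ≠ l → |∑ i, a i j * a i l| ≤ ε) (z : κ → ℝ) :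
    (Fintype.card ι - Fintype.card κ * ε) * ∑ j, z j ^ 2 ≤ ∑ i, (∑ j, a i j * z j) ^ 2 := by
  have hexp : ∑ i, (∑ j, a i j * z j) ^ 2 = ∑ j, ∑ l, z j * z l * ∑ i, a i j * a i l := by
    simp only [sq, Finset.sum_mul_sum]
    simp only [Finset.mul_sum]
    rw [Finset.sum_comm]
    refine Finset.sum_congr rfl fun j _ => ?_
    rw [Finset.sum_comm]
    exact Finset.sum_congr rfl fun l _ => Finset.sum_congr rfl fun i _ => by ring
  rw [hexp]
  refine sum_mul_mul_ge_of_abs_le _ hε (fun j => ?_) hoff z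
  simp [← sq, ha]

end Gram

section Signs

variable {d : ℕ}

def boolSign (b : Bool) : ℝ := if b then 1 else -1

lemma boolSign_sq (b : Bool) : boolSign b ^ 2 = 1 := by
  cases b <;> norm_num [boolSign]

lemma boolSign_not (b : Bool) : boolSign (!b) = -boolSign b := by
  cases b <;> simp [boolSign]

lemma ite_add_sub_eq_add_mul_boolSign (b : Bool) (μ η : ℝ) :
    (if b then μ + η else μ - η) = μ + η * boolSign b := by
  cases b <;> simp [boolSign]; ring

def flipAt (k : Fin d) : Equiv.Perm (Fin d → Bool) :=
  Function.Involutive.toPerm (fun v => Function.update v k (!v k)) fun v => by simp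

lemma flipAt_apply (k : Fin d) (v : Fin d → Bool) :
    flipAt k v = Function.update v k (!v k) :=
  rfl

def augSign (v : Fin d → Bool) : Fin (d + 1) → ℝ :=
  Fin.cons 1 fun k => boolSign (v k)

lemma augSign_sq (v : Fin d → Bool) (j : Fin (d + 1)) : augSign v j ^ 2 = 1 := by
  cases j using Fin.cases <;> simp [augSign, boolSign_sq]

lemma augSign_flipAt_succ_self (k : Fin d) (v : Fin d → Bool) :
    augSign (flipAt k v) k.succ = -augSign v k.succ := by
  simp [augSign, flipAt_apply, boolSign_not]

lemma augSign_flipAt_of_ne {k : Fin d} {l : Fin (d + 1)} (h : l ≠ k.succ)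
    (v : Fin d → Bool) : augSign (flipAt k v) l = augSign v l := by
  cases l using Fin.cases with
  | zero => simp [augSign]
  | succ l =>
    have hlk : l ≠ k := fun e => h (congrArg Fin.succ e)
    simp [augSign, flipAt_apply, hlk]

lemma exists_perm_augSign_mul_eq_neg {j l : Fin (d + 1)} (hjl : j ≠ l) :
    ∃ σ : Equiv.Perm (Fin d → Bool),
      ∀ v, augSign (σ v) j * augSign (σ v) l = -(augSign v j * augSign v l) := by
  cases j using Fin.cases with
  | zero =>
    obtain ⟨k, rfl⟩ := Fin.exists_succ_eq.2 hjl.symm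
    exact ⟨flipAt k, fun v => by
      rw [augSign_flipAt_of_ne (Fin.succ_ne_zero k).symm, augSign_flipAt_succ_self]; ring⟩
  | succ k =>
    exact ⟨flipAt k, fun v => by
      rw [augSign_flipAt_of_ne hjl.symm, augSign_flipAt_succ_self]; ring⟩

lemma sum_ite_mul_eq_sum_augSign_mul (v : Fin d → Bool) (μ η : ℝ) (u : Fin d → ℝ) :
    ∑ k, (if v k then μ + η else μ - η) * u k =
      ∑ j, augSign v j * (Fin.cons (μ * ∑ k, u k) (fun k => η * u k) : Fin (d + 1) → ℝ) j := by
  simp only [Fin.sum_univ_succ, augSign, Fin.cons_zero, Fin.cons_succ, one_mul,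
    ite_add_sub_eq_add_mul_boolSign, add_mul, Finset.sum_add_distrib, Finset.mul_sum]
  congr 1
  exact Finset.sum_congr rfl fun k _ => by ring

lemma hasSubgaussianMGF_augSign_mul {j l : Fin (d + 1)} (hjl : j ≠ l) :
    HasSubgaussianMGF (fun v : Fin d → Bool => augSign v j * augSign v l) 1
      (uniformOn Set.univ) := by
  obtain ⟨σ, hσ⟩ := exists_perm_augSign_mul_eq_neg hjl
  refine hasSubgaussianMGF_uniformOn_of_sign_reversing (fun v => ?_) σ hσ
  rw [← sq_le_one_iff_abs_le_one, mul_pow, augSign_sq, augSign_sq, one_mul]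

end Signs

def HasLeastEigenvalueBound {n d : ℕ} (μ η : ℝ) (ω : Fin n → Fin d → Bool) : Prop :=
  ∀ u : Fin d → ℝ, ∑ k, u k ^ 2 = 1 →
    η ^ 2 / 3 ≤ (1 / n) * ∑ i, (∑ k, (if ω i k then μ + η else μ - η) * u k) ^ 2

lemma hasLeastEigenvalueBound_of_abs_sum_augSign_le {n d : ℕ} (hn : 0 < n) (μ η : ℝ)
    {ω : Fin n → Fin d → Bool}
    (h : ∀ j l, j ≠ l → |∑ i, augSign (ω i) j * augSign (ω i) l| ≤ 2 * n / (3 * (d + 1))) :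
    HasLeastEigenvalueBound μ η ω := by
  intro u hu
  set z : Fin (d + 1) → ℝ := Fin.cons (μ * ∑ k, u k) (fun k => η * u k)
  have hz : η ^ 2 ≤ ∑ j, z j ^ 2 := by
    simp only [z, Fin.sum_univ_succ, Fin.cons_zero, Fin.cons_succ, mul_pow, ← Finset.mul_sum, hu]
    nlinarith [sq_nonneg (μ * ∑ k, u k)]
  have hgram := sum_sq_sum_mul_ge_of_sq_eq_one (fun i => augSign (ω i))
    (fun i => augSign_sq (ω i)) (by positivity) h z
  have hnR : (0 : ℝ) < n := by exact_mod_cast hn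
  have hcoef : (Fintype.card (Fin n) : ℝ) - Fintype.card (Fin (d + 1)) * (2 * n / (3 * (d + 1)))
      = n / 3 := by
    simp only [Fintype.card_fin, Nat.cast_add, Nat.cast_one]
    field_simp
    ring
  simp only [sum_ite_mul_eq_sum_augSign_mul]
  rw [one_div, le_inv_mul_iff₀ hnR]
  calc n * (η ^ 2 / 3) ≤ n / 3 * ∑ j, z j ^ 2 := by nlinarith
    _ ≤ _ := hcoef ▸ hgram

lemma hasLeastEigenvalueBound_of_sum_boolSign_ge {n : ℕ} (hn : 0 < n) {μ η : ℝ} (hη : 0 < η)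
    (hημ : η < μ) {ω : Fin n → Fin 1 → Bool} (h : -(4 / 5 * n) ≤ ∑ i, boolSign (ω i 0)) :
    HasLeastEigenvalueBound μ η ω := by
  intro u hu
  have hu0 : u 0 ^ 2 = 1 := by simpa using hu
  have hnR : (0 : ℝ) < n := by exact_mod_cast hn
  have hexpand : ∑ i, (∑ k, (if ω i k then μ + η else μ - η) * u k) ^ 2
      = n * (μ ^ 2 + η ^ 2) + 2 * μ * η * ∑ i, boolSign (ω i 0) := by
    have hrow : ∀ i, (∑ k, (if ω i k then μ + η else μ - η) * u k) ^ 2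
        = μ ^ 2 + η ^ 2 + 2 * μ * η * boolSign (ω i 0) := fun i => by
      rw [Fin.sum_univ_one, ite_add_sub_eq_add_mul_boolSign, mul_pow, hu0, mul_one]
      linear_combination η ^ 2 * boolSign_sq (ω i 0)
    simp only [hrow, Finset.sum_add_distrib, Finset.sum_const, Finset.card_univ, Fintype.card_fin,
      nsmul_eq_mul, ← Finset.mul_sum]
    ring
  rw [hexpand, one_div, le_inv_mul_iff₀ hnR]
  have hμη : 0 ≤ 2 * μ * η := by nlinarith
  nlinarith [mul_le_mul_of_nonneg_left h hμη, sq_nonneg (μ - 4 / 5 * η)]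

lemma uniformOn_real_not_hasLeastEigenvalueBound_le (n d : ℕ) (μ η : ℝ) :
    (uniformOn (Set.univ : Set (Fin n → Fin d → Bool))).real
        {ω | ¬HasLeastEigenvalueBound μ η ω} ≤
      2 * (d + 1) ^ 2 * exp (-(2 * n / (9 * (d + 1) ^ 2))) := by
  rcases n.eq_zero_or_pos with rfl | hn
  · refine measureReal_le_one.trans ?_
    simp only [CharP.cast_eq_zero, mul_zero, zero_div, neg_zero, exp_zero, mul_one]
    nlinarith [(d.cast_nonneg : (0 : ℝ) ≤ d)]
  set ε : ℝ := 2 * n / (3 * (d + 1))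
  let E : Fin (d + 1) × Fin (d + 1) → Set (Fin n → Fin d → Bool) :=
    fun p => {ω | ε ≤ |∑ i, augSign (ω i) p.1 * augSign (ω i) p.2|}
  have hsub : {ω | ¬HasLeastEigenvalueBound μ η ω} ⊆ ⋃ p ∈ (univ : Finset _).offDiag, E p := by
    intro ω hω
    by_contra hnot
    simp only [Set.mem_iUnion, Finset.mem_offDiag, Finset.mem_univ, true_and, exists_prop,
      not_exists, not_and, Set.mem_ofPred_eq, not_le, E, Prod.forall] at hnot
    exact hω (hasLeastEigenvalueBound_of_abs_sum_augSign_le hn μ η fun j l hjl =>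
      (hnot j l hjl).le)
  have hE : ∀ p ∈ (univ : Finset _).offDiag,
      (uniformOn Set.univ).real (E p) ≤ 2 * exp (-(2 * n / (9 * (d + 1) ^ 2))) := by
    intro p hp
    have hε : ε ^ 2 / (2 * (Fintype.card (Fin n) * ((1 : ℝ≥0) : ℝ))) =
        2 * n / (9 * (d + 1) ^ 2) := by
      simp only [Fintype.card_fin, NNReal.coe_one, mul_one, ε]
      field_simp
      ring
    have := uniformOn_real_abs_sum_ge_le (ι := Fin n)
      (hasSubgaussianMGF_augSign_mul (Finset.mem_offDiag.1 hp).2.2) (ε := ε) (by positivity)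
    rwa [neg_div, hε] at this
  have hcard : ((univ : Finset (Fin (d + 1))).offDiag.card : ℝ) ≤ (d + 1) ^ 2 := by
    have : (univ : Finset (Fin (d + 1))).offDiag.card ≤ (d + 1) ^ 2 := by
      rw [Finset.offDiag_card, Finset.card_univ, Fintype.card_fin, sq]
      exact Nat.sub_le _ _
    exact_mod_cast this
  calc _ ≤ (uniformOn Set.univ).real (⋃ p ∈ (univ : Finset _).offDiag, E p) :=
        measureReal_mono hsub (measure_ne_top _ _)
    _ ≤ ∑ p ∈ (univ : Finset _).offDiag, (uniformOn Set.univ).real (E p) :=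
        measureReal_biUnion_finset_le _ _
    _ ≤ (univ : Finset _).offDiag.card * (2 * exp (-(2 * n / (9 * (d + 1) ^ 2)))) :=
        (Finset.sum_le_sum hE).trans_eq (by rw [Finset.sum_const, nsmul_eq_mul])
    _ ≤ (d + 1) ^ 2 * (2 * exp (-(2 * n / (9 * (d + 1) ^ 2)))) := by gcongr
    _ = _ := by ring

lemma uniformOn_real_not_hasLeastEigenvalueBound_le_of_fin_one (n : ℕ) {μ η : ℝ} (hη : 0 < η)
    (hημ : η < μ) :
    (uniformOn (Set.univ : Set (Fin n → Fin 1 → Bool))).real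
        {ω | ¬HasLeastEigenvalueBound μ η ω} ≤ exp (-(8 * n / 25)) := by
  rcases n.eq_zero_or_pos with rfl | hn
  · simp
  have hsub : {ω : Fin n → Fin 1 → Bool | ¬HasLeastEigenvalueBound μ η ω} ⊆
      {ω | 4 / 5 * n ≤ ∑ i, -(augSign (ω i) 0 * augSign (ω i) 1)} := by
    intro ω hω
    by_contra hnot
    refine hω (hasLeastEigenvalueBound_of_sum_boolSign_ge hn hη hημ ?_)
    simp only [Set.mem_ofPred_eq, not_le, Finset.sum_neg_distrib] at hnot
    have : -∑ i, boolSign (ω i 0) ≤ 4 / 5 * n := by simpa [augSign] using hnot.le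
    linarith
  have hε : (4 / 5 * n : ℝ) ^ 2 / (2 * (Fintype.card (Fin n) * ((1 : ℝ≥0) : ℝ))) = 8 * n / 25 := by
    simp only [Fintype.card_fin, NNReal.coe_one, mul_one]
    field_simp
    ring
  have := uniformOn_real_sum_ge_le (ι := Fin n)
    (hasSubgaussianMGF_augSign_mul (d := 1) (j := 0) (l := 1) (by decide)).neg
    (ε := 4 / 5 * n) (by positivity)
  rw [neg_div, hε] at this
  exact (measureReal_mono hsub (measure_ne_top _ _)).trans this

lemma mul_exp_neg_le_of_log_sub_log_le {a δ x : ℝ} (ha : 0 < a) (hδ : 0 < δ)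
    (h : log a - log δ ≤ x) : a * exp (-x) ≤ δ := by
  calc a * exp (-x) ≤ a * exp (log δ - log a) := by gcongr; linarith
    _ = δ := by rw [exp_sub, exp_log ha, exp_log hδ]; field_simp

lemma two_mul_sq_mul_exp_le_of_log_sq_le {d n : ℕ} {η δ : ℝ} (hd : 2 ≤ d) (hη : 0 < η) (hη1 : η < 1)
    (hδ : 0 < δ) (hδ1 : δ < 1) (hn : 200 * d ^ 2 * log (d / (δ * η)) ^ 2 / η ^ 2 ≤ n) :
    2 * (d + 1) ^ 2 * exp (-(2 * n / (9 * (d + 1) ^ 2))) ≤ δ := by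
  set L := log (d / (δ * η))
  have hdR : (2 : ℝ) ≤ d := by exact_mod_cast hd
  have hδη : 0 < δ * η := mul_pos hδ hη
  have hLd : log d ≤ L :=
    log_le_log (by positivity) (le_div_self (by positivity) hδη (by nlinarith))
  have hLδ : -log δ ≤ L := by
    rw [← log_inv]
    exact log_le_log (by positivity) (by rw [inv_eq_one_div, div_le_div_iff₀ hδ hδη]; nlinarith)
  have hL : 0.69 ≤ L := by
    linarith [log_two_gt_d9, log_le_log two_pos hdR]
  have hnL : 200 * (d : ℝ) ^ 2 * L ^ 2 ≤ n := by
    refine le_trans ?_ hn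
    rw [le_div_iff₀ (by positivity)]
    have : η ^ 2 ≤ 1 := by nlinarith
    nlinarith [sq_nonneg ((d : ℝ) * L)]
  have hlog : log (2 * (d + 1) ^ 2) ≤ 5 * log d := by
    rw [show 5 * log d = log ((d : ℝ) ^ 5) by rw [log_pow]; norm_num]
    refine log_le_log (by positivity) ?_
    have : (8 : ℝ) ≤ d ^ 3 := by nlinarith
    nlinarith
  have hexp : 19 * L ^ 2 ≤ 2 * n / (9 * (d + 1) ^ 2) := by
    rw [le_div_iff₀ (by positivity)]
    nlinarith
  refine mul_exp_neg_le_of_log_sub_log_le (by positivity) hδ ?_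
  nlinarith

lemma exp_neg_le_of_log_sq_le {n : ℕ} {η δ : ℝ} (hη : 0 < η) (hη1 : η < 1) (hδ : 0 < δ)
    (hδ1 : δ < 1) (hn : 200 * log (1 / (δ * η)) ^ 2 / η ^ 2 ≤ n) : exp (-(8 * n / 25)) ≤ δ := by
  set L := log (1 / (δ * η))
  have hδη : 0 < δ * η := mul_pos hδ hη
  have hLδ : -log δ ≤ L := by
    rw [← log_inv]
    exact log_le_log (by positivity) (by rw [inv_eq_one_div, div_le_div_iff₀ hδ hδη]; nlinarith)
  have hδ0 : 0 < -log δ := neg_pos.2 (log_neg hδ hδ1)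
  have hnL : 200 * L ^ 2 ≤ n := by
    refine le_trans ?_ hn
    rw [le_div_iff₀ (by positivity)]
    have : η ^ 2 ≤ 1 := by nlinarith
    nlinarith [sq_nonneg L]
  have hn1 : (1 : ℝ) ≤ n :=
    Nat.one_le_cast.2 (by exact_mod_cast (lt_of_lt_of_le (by nlinarith) hnL : (0 : ℝ) < n))
  simpa using mul_exp_neg_le_of_log_sub_log_le one_pos hδ (x := 8 * n / 25) (by
    rw [log_one, zero_sub]
    rcases le_or_gt L (8 / 25) with h | h <;> nlinarith)

open Classical in
theorem random_pm_vectors_least_eigenvalue :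
    ∃ C : ℝ, 0 < C ∧ ∀ (d n : ℕ) (μ η δ : ℝ),
      0 < η → η < μ → μ < 1 → 0 < δ →
      C * d ^ 2 * (Real.log (d / (δ * η))) ^ 2 / η ^ 2 ≤ n →
      1 - δ ≤ ∑ ω : Fin n → Fin d → Bool,
        if (∀ u : Fin d → ℝ, ∑ k, u k ^ 2 = 1 →
            η ^ 2 / 3 ≤ (1 / n) * ∑ i, (∑ k, (if ω i k then μ + η else μ - η) * u k) ^ 2)
        then ((1 : ℝ) / 2) ^ (n * d) else 0 := by
  refine ⟨200, by norm_num, fun d n μ η δ hη hημ hμ1 hδ hn => ?_⟩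
  rcases le_or_gt 1 δ with hδ1 | hδ1
  · exact (sub_nonpos.2 hδ1).trans (Finset.sum_nonneg fun _ _ => by positivity)
  have hcard : ((1 : ℝ) / 2) ^ (n * d) = (Fintype.card (Fin n → Fin d → Bool) : ℝ)⁻¹ := by
    simp [← pow_mul, mul_comm]
  rw [hcard]
  refine one_sub_le_sum_ite_inv_card (HasLeastEigenvalueBound μ η) ?_
  have hη1 : η < 1 := hημ.trans hμ1
  rcases d with _ | _ | d
  · simp [HasLeastEigenvalueBound, hδ.le]
  · exact (uniformOn_real_not_hasLeastEigenvalueBound_le_of_fin_one n hη hημ).trans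
      (exp_neg_le_of_log_sq_le hη hη1 hδ hδ1 (by simpa using hn))
  · exact (uniformOn_real_not_hasLeastEigenvalueBound_le n (d + 2) μ η).trans
      (two_mul_sq_mul_exp_le_of_log_sq_le (by omega) hη hη1 hδ hδ1 hn)
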